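/- arXiv:2403.16260 — 2 statements merged into one kernel-verified Lean document; each statement's English description precedes it below -/
import Mathlib

section
/- For a rectified epsilon-skew normal random variable Z = max(0, X), where X has density p(x) = φ((x−μ)/((1+ε)σ))/σ for x < μ and p(x) = φ((x−μ)/((1−ε)σ))/σ for x ≥ μ, with μ > 0, σ > 0, and ε ∈ (−1, 0), the expectation satisfies E[Z] = μ[1 − (1+ε)Φ(−μ/((1+ε)σ))] + (1+ε)²σ·φ(−μ/((1+ε)σ)) − 4εσ/√(2π). -/
open Real MeasureTheory

noncomputable def stdPdf (t : ℝ) : ℝ := Real.exp (-t^2/2) / Real.sqrt (2*Real.pi)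

noncomputable def stdCdf (x : ℝ) : ℝ := ∫ t in Set.Iic x, stdPdf t

noncomputable def esnPdf (μ σ ε x : ℝ) : ℝ :=
  if x < μ then stdPdf ((x - μ)/((1+ε)*σ)) / σ else stdPdf ((x - μ)/((1-ε)*σ)) / σ

open Set Filter Topology ProbabilityTheory

/-!
On each side of `μ` the density is a rescaled standard normal density, and
`y ↦ m a Φ((y - m) / a) - a² φ((y - m) / a)` is a primitive of `y φ((y - m) / a)` tending to `m a`
at `+∞`. Hence `E[Z] = ∫_{(0, μ]} x p(x) dx + ∫_{(μ, ∞)} x p(x) dx` is a difference of values of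
these primitives, and the contributions of `Φ(0) = 1/2` and `φ(0) = 1/√(2π)` from both sides
collapse to `μ - 4εσ/√(2π)`.
-/

lemma stdPdf_eq_gaussianPDFReal : stdPdf = gaussianPDFReal 0 1 := by
  ext t
  simp [stdPdf, gaussianPDFReal, div_eq_inv_mul]

lemma continuous_stdPdf : Continuous stdPdf := by
  unfold stdPdf; fun_prop

lemma integrable_stdPdf : Integrable stdPdf :=
  stdPdf_eq_gaussianPDFReal ▸ integrable_gaussianPDFReal 0 1

lemma integral_stdPdf : ∫ t, stdPdf t = 1 :=
  stdPdf_eq_gaussianPDFReal ▸ integral_gaussianPDFReal_eq_one 0 one_ne_zero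

lemma stdPdf_neg (t : ℝ) : stdPdf (-t) = stdPdf t := by
  simp [stdPdf]

lemma stdPdf_zero : stdPdf 0 = 1 / √(2 * π) := by
  simp [stdPdf]

lemma hasDerivAt_stdPdf (x : ℝ) : HasDerivAt stdPdf (-x * stdPdf x) x := by
  have h : HasDerivAt (fun t : ℝ => -t ^ 2 / 2) (-x) x := by
    exact ((hasDerivAt_pow 2 x).neg.div_const 2).congr_deriv (by push_cast; ring)
  exact (h.exp.div_const (√(2 * π))).congr_deriv (by rw [stdPdf]; ring)

lemma tendsto_stdPdf_atTop : Tendsto stdPdf atTop (𝓝 0) := by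
  unfold stdPdf
  have h : Tendsto (fun t : ℝ => -t ^ 2 / 2) atTop atBot :=
    tendsto_neg_atTop_atBot.comp ((tendsto_pow_atTop two_ne_zero).atTop_div_const two_pos)
      |>.congr fun t => by simp [neg_div]
  simpa using (tendsto_exp_atBot.comp h).div_const (√(2 * π))

lemma integrable_mul_stdPdf : Integrable fun t => t * stdPdf t :=
  ((integrable_mul_exp_neg_mul_sq one_half_pos).div_const (√(2 * π))).congr
    (.of_forall fun t => by simp only [stdPdf]; ring_nf)

lemma stdCdf_add_integral_Ioi (x : ℝ) : stdCdf x + ∫ t in Ioi x, stdPdf t = 1 := by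
  rw [stdCdf, intervalIntegral.integral_Iic_add_Ioi integrable_stdPdf.integrableOn
    integrable_stdPdf.integrableOn, integral_stdPdf]

lemma stdCdf_zero : stdCdf 0 = 1 / 2 := by
  have h := integral_comp_neg_Iic 0 stdPdf
  simp only [stdPdf_neg, neg_zero] at h
  rw [← stdCdf] at h
  linarith [stdCdf_add_integral_Ioi 0]

lemma stdCdf_eq_half_add (x : ℝ) : stdCdf x = 1 / 2 + ∫ t in 0..x, stdPdf t := by
  have h := intervalIntegral.integral_Iic_sub_Iic (a := 0) (b := x)
    integrable_stdPdf.integrableOn integrable_stdPdf.integrableOn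
  rw [← stdCdf_zero]
  unfold stdCdf
  linarith

lemma hasDerivAt_stdCdf (x : ℝ) : HasDerivAt stdCdf (stdPdf x) x := by
  rw [show stdCdf = fun x => 1 / 2 + ∫ t in 0..x, stdPdf t from funext stdCdf_eq_half_add]
  exact ((continuous_stdPdf.integral_hasStrictDerivAt 0 x).hasDerivAt).const_add _

lemma continuous_stdCdf : Continuous stdCdf :=
  continuous_iff_continuousAt.2 fun x => (hasDerivAt_stdCdf x).continuousAt

lemma tendsto_stdCdf_atTop : Tendsto stdCdf atTop (𝓝 1) := by
  have h := (intervalIntegral_tendsto_integral_Ioi 0 integrable_stdPdf.integrableOn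
    tendsto_id).const_add (stdCdf 0)
  rw [stdCdf_add_integral_Ioi] at h
  refine h.congr fun x => ?_
  rw [stdCdf_eq_half_add x, stdCdf_zero, id]

/-- `∫ x in Iic y, x * stdPdf ((x - m) / a)` for `a > 0`, in closed form. -/
noncomputable def normalPartialMoment (m a y : ℝ) : ℝ :=
  m * a * stdCdf ((y - m) / a) - a ^ 2 * stdPdf ((y - m) / a)

section PartialMoment

variable (m : ℝ)

lemma hasDerivAt_normalPartialMoment {a : ℝ} (ha : a ≠ 0) (x : ℝ) :
    HasDerivAt (normalPartialMoment m a) (x * stdPdf ((x - m) / a)) x := by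
  have hlin : HasDerivAt (fun y : ℝ => (y - m) / a) (1 / a) x :=
    ((hasDerivAt_id x).sub_const m).div_const a
  have h := (((hasDerivAt_stdCdf _).comp x hlin).const_mul (m * a)).sub
    (((hasDerivAt_stdPdf _).comp x hlin).const_mul (a ^ 2))
  refine h.congr_deriv ?_
  field_simp
  ring

lemma continuous_normalPartialMoment (a : ℝ) : Continuous (normalPartialMoment m a) := by
  unfold normalPartialMoment
  have := continuous_stdCdf
  have := continuous_stdPdf
  fun_prop

lemma tendsto_normalPartialMoment_atTop {a : ℝ} (ha : 0 < a) :
    Tendsto (normalPartialMoment m a) atTop (𝓝 (m * a)) := by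
  have harg : Tendsto (fun y : ℝ => (y - m) / a) atTop atTop :=
    (tendsto_atTop_add_const_right _ (-m) tendsto_id).atTop_div_const ha
  unfold normalPartialMoment
  simpa using ((tendsto_stdCdf_atTop.comp harg).const_mul (m * a)).sub
    ((tendsto_stdPdf_atTop.comp harg).const_mul (a ^ 2))

lemma normalPartialMoment_self (a : ℝ) :
    normalPartialMoment m a m = m * a / 2 - a ^ 2 / √(2 * π) := by
  simp only [normalPartialMoment, sub_self, zero_div, stdCdf_zero, stdPdf_zero]
  ring

lemma integrable_mul_stdPdf_comp {a : ℝ} (ha : a ≠ 0) :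
    Integrable fun x => x * stdPdf ((x - m) / a) := by
  have h := ((integrable_mul_stdPdf.comp_div ha).comp_sub_right m).const_mul a |>.add
    (((integrable_stdPdf.comp_div ha).comp_sub_right m).const_mul m)
  refine h.congr (.of_forall fun x => ?_)
  simp only [Pi.add_apply, ← mul_assoc, mul_div_cancel₀ _ ha]
  ring

lemma intervalIntegral_mul_stdPdf_comp {a : ℝ} (ha : a ≠ 0) (u v : ℝ) :
    ∫ x in u..v, x * stdPdf ((x - m) / a) = normalPartialMoment m a v - normalPartialMoment m a u :=
  intervalIntegral.integral_eq_sub_of_hasDerivAt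
    (fun x _ => hasDerivAt_normalPartialMoment m ha x)
    (integrable_mul_stdPdf_comp m ha).intervalIntegrable

lemma integral_Ioi_mul_stdPdf_comp {a : ℝ} (ha : 0 < a) (u : ℝ) :
    ∫ x in Ioi u, x * stdPdf ((x - m) / a) = m * a - normalPartialMoment m a u :=
  integral_Ioi_of_hasDerivAt_of_tendsto (continuous_normalPartialMoment m a).continuousWithinAt
    (fun x _ => hasDerivAt_normalPartialMoment m ha.ne' x)
    (integrable_mul_stdPdf_comp m ha.ne').integrableOn (tendsto_normalPartialMoment_atTop m ha)

end PartialMoment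

lemma integral_max_zero_mul (f : ℝ → ℝ) : ∫ x, max 0 x * f x = ∫ x in Ioi 0, x * f x := by
  rw [← setIntegral_eq_integral_of_forall_compl_eq_zero fun x hx => by
    rw [max_eq_left (not_lt.1 hx), zero_mul]]
  exact setIntegral_congr_fun measurableSet_Ioi fun x hx => by rw [max_eq_right (le_of_lt hx)]

section ESN

variable {μ σ ε x : ℝ}

lemma esnPdf_of_le (hx : x ≤ μ) : esnPdf μ σ ε x = stdPdf ((x - μ) / ((1 + ε) * σ)) / σ := by
  rcases hx.lt_or_eq with hx | rfl
  · simp [esnPdf, hx]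
  · simp [esnPdf]

lemma esnPdf_of_ge (hx : μ ≤ x) : esnPdf μ σ ε x = stdPdf ((x - μ) / ((1 - ε) * σ)) / σ := by
  simp [esnPdf, not_lt.2 hx]

end ESN

theorem rectified_esn_expectation (μ σ ε : ℝ) (hμ : 0 < μ) (hσ : 0 < σ)
    (hε : ε ∈ Set.Ioo (-1 : ℝ) 0) :
    (∫ x, max 0 x * esnPdf μ σ ε x) =
      μ * (1 - (1+ε) * stdCdf (-μ/((1+ε)*σ)))
        + (1+ε)^2 * σ * stdPdf (-μ/((1+ε)*σ)) - 4*ε*σ/Real.sqrt (2*Real.pi) := by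
  obtain ⟨hε₁, hε₂⟩ := hε
  set a := (1 + ε) * σ
  set b := (1 - ε) * σ
  have ha : 0 < a := mul_pos (by linarith) hσ
  have hb : 0 < b := mul_pos (by linarith) hσ
  have hleft : EqOn (fun x => x * esnPdf μ σ ε x) (fun x => x * stdPdf ((x - μ) / a) / σ)
      (Ioc 0 μ) := fun x hx => by dsimp only; rw [esnPdf_of_le hx.2, mul_div_assoc]
  have hright : EqOn (fun x => x * esnPdf μ σ ε x) (fun x => x * stdPdf ((x - μ) / b) / σ)
      (Ioi μ) := fun x hx => by dsimp only; rw [esnPdf_of_ge hx.le, mul_div_assoc]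
  rw [integral_max_zero_mul, ← Ioc_union_Ioi_eq_Ioi hμ.le,
    setIntegral_union (Ioc_disjoint_Ioi le_rfl) measurableSet_Ioi
      (((integrable_mul_stdPdf_comp μ ha.ne').div_const σ).integrableOn.congr_fun
        hleft.symm measurableSet_Ioc)
      (((integrable_mul_stdPdf_comp μ hb.ne').div_const σ).integrableOn.congr_fun
        hright.symm measurableSet_Ioi),
    setIntegral_congr_fun measurableSet_Ioc hleft, setIntegral_congr_fun measurableSet_Ioi hright,
    integral_div, integral_div, ← intervalIntegral.integral_of_le hμ.le,
    intervalIntegral_mul_stdPdf_comp μ ha.ne', integral_Ioi_mul_stdPdf_comp μ hb,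
    normalPartialMoment_self, normalPartialMoment_self]
  simp only [normalPartialMoment, zero_sub, neg_div]
  field_simp
  ring
end

section
/- For every integer n ≥ 3, the Wallis-type integral satisfies ∫₀^{π/2} sin^{n−2}θ dθ > (2√2)/(3√(n−2)). -/
/-!
Bernoulli's inequality and `cos x ≥ 1 - x²/2` give `cos^m x ≥ 1 - m x²/2` on `[0, c]` with
`c = √(2/m)`, where the right side falls to `0`. Integrating this parabola over `[0, c]` yields
exactly `2c/3 = 2√2/(3√m)`, the inequality is strict at `x = c`, and `sin^m` and `cos^m` have
the same integral over `[0, π/2]` by the reflection `θ ↦ π/2 - θ`.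
-/

open Real intervalIntegral

theorem integral_comp_sin_eq_integral_comp_cos {E : Type*} [NormedAddCommGroup E]
    [NormedSpace ℝ E] (f : ℝ → E) :
    ∫ θ in (0:ℝ)..(π/2), f (sin θ) = ∫ θ in (0:ℝ)..(π/2), f (cos θ) := by
  simpa only [sin_pi_div_two_sub, sub_self, sub_zero] using
    (integral_comp_sub_left (fun θ => f (sin θ)) (π/2) (a := 0) (b := π/2)).symm

theorem one_sub_mul_sq_div_two_le_cos_pow (m : ℕ) {x : ℝ} (hx : x ^ 2 ≤ 2) :
    1 - m * x ^ 2 / 2 ≤ cos x ^ m :=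
  calc 1 - m * x ^ 2 / 2 = 1 + m * (-(x ^ 2 / 2)) := by ring
    _ ≤ (1 + -(x ^ 2 / 2)) ^ m := one_add_mul_le_pow (by linarith) m
    _ ≤ cos x ^ m :=
      pow_le_pow_left₀ (by linarith) (by linarith [one_sub_sq_div_two_le_cos (x := x)]) m

theorem integral_one_sub_mul_sq_div_two (a c : ℝ) :
    ∫ x in (0:ℝ)..c, (1 - a * x ^ 2 / 2) = c - a * c ^ 3 / 6 := by
  simp only [mul_div_assoc]
  rw [integral_sub intervalIntegrable_const
      (((intervalIntegral.intervalIntegrable_pow 2).div_const 2).const_mul a),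
    integral_const, integral_const_mul, integral_div, integral_pow]
  simp only [smul_eq_mul]
  ring

theorem integral_cos_pow_mono_right (m : ℕ) {c : ℝ} (hc0 : 0 ≤ c) (hc : c ≤ π / 2) :
    ∫ x in (0:ℝ)..c, cos x ^ m ≤ ∫ x in (0:ℝ)..(π/2), cos x ^ m := by
  refine integral_mono_interval le_rfl hc0 hc ?_ ((continuous_cos.pow m).intervalIntegrable _ _)
  refine (MeasureTheory.ae_restrict_mem measurableSet_Ioc).mono fun x hx => ?_
  exact pow_nonneg (cos_nonneg_of_mem_Icc ⟨by linarith [hx.1, pi_pos], hx.2⟩) m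

theorem two_mul_sqrt_two_div_lt_integral_cos_pow {m : ℕ} (hm : m ≠ 0) :
    2 * √2 / (3 * √m) < ∫ x in (0:ℝ)..(π/2), cos x ^ m := by
  have hm1 : (1:ℝ) ≤ m := by exact_mod_cast Nat.one_le_iff_ne_zero.2 hm
  set c := √(2 / m) with hc
  have hc0 : 0 < c := sqrt_pos.2 (by positivity)
  have hmc : m * c ^ 2 = 2 := by rw [sq_sqrt (by positivity)]; field_simp
  have hc2 : c ^ 2 ≤ 2 := by nlinarith
  have hc_lt : c < π / 2 := by nlinarith [pi_gt_three]
  calc 2 * √2 / (3 * √m) = ∫ x in (0:ℝ)..c, (1 - m * x ^ 2 / 2) := by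
        rw [integral_one_sub_mul_sq_div_two, show m * c ^ 3 / 6 = c * (m * c ^ 2) / 6 by ring,
          hmc, hc, sqrt_div zero_le_two]
        ring
    _ < ∫ x in (0:ℝ)..c, cos x ^ m := by
        refine integral_lt_integral_of_continuousOn_of_le_of_exists_lt hc0 (by fun_prop)
          (by fun_prop) (fun x hx => one_sub_mul_sq_div_two_le_cos_pow m ?_)
          ⟨c, ⟨hc0.le, le_rfl⟩, ?_⟩
        · nlinarith [hx.1, hx.2]
        · rw [show 1 - m * c ^ 2 / 2 = (0:ℝ) by linarith]
          exact pow_pos (cos_pos_of_mem_Ioo ⟨by linarith, hc_lt⟩) m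
    _ ≤ ∫ x in (0:ℝ)..(π/2), cos x ^ m := integral_cos_pow_mono_right m hc0.le hc_lt.le

theorem wallis_lower_bound (n : ℕ) (hn : 3 ≤ n) :
    (2 * Real.sqrt 2) / (3 * Real.sqrt ((n:ℝ) - 2)) <
      ∫ θ in (0:ℝ)..(π/2), Real.sin θ ^ (n-2) := by
  have hcast : (n:ℝ) - 2 = ((n - 2 : ℕ) : ℝ) := by
    rw [Nat.cast_sub (by omega), Nat.cast_ofNat]
  rw [hcast, integral_comp_sin_eq_integral_comp_cos (· ^ (n - 2))]
  exact two_mul_sqrt_two_div_lt_integral_cos_pow (by omega)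
end
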